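/- arXiv:2201.03790 — 5 statements merged into one kernel-verified Lean document; each statement's English description precedes it below -/
import Mathlib

section
/- Under the hypotheses of the previous drift condition (∑_j P(i,j) W(j) ≤ exp(k − ℓ(i)) W(i) for all i, with W ≥ 1, ℓ ≥ 0), for the Markov chain (X_t) with kernel P and any initial state i, limsup_{T→∞} (1/T) · log E_i[ exp(∑_{t=0}^{T−1} ℓ(X_t)) ] ≤ k. -/
/-!
The drift function `W` is a supersolution of the multiplicative Poisson inequality, so the
positive operator `f ↦ exp ℓ · P f` maps the band `1 ≤ f ≤ c W` into `1 ≤ f ≤ eᵏ c W`.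
Iterating from the constant `1 ≤ W` gives `1 ≤ E_i[exp(∑_{t<T} ℓ(X_t))] ≤ e^{kT} W(i)`,
hence `(1/T) log E_i[…] ≤ k + log W(i) / T → k`. The lower bound `1 ≤ …` keeps the
sequence bounded below, so that its `limsup` is the genuine one.
-/

open Filter Real

section RiskSensitive

variable {S : Type*} (P : S → S → ℝ) (ℓ : S → ℝ)

noncomputable def riskOperator (f : S → ℝ) : S → ℝ :=
  fun i => exp (ℓ i) * ∑' j, P i j * f j

variable {P ℓ}

theorem riskOperator_mem_band {W : S → ℝ} {k c : ℝ} (hP0 : ∀ i j, 0 ≤ P i j)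
    (hP1 : ∀ i, HasSum (P i) 1) (hℓ : ∀ i, 0 ≤ ℓ i)
    (hsum : ∀ i, Summable fun j => P i j * W j)
    (hdrift : ∀ i, ∑' j, P i j * W j ≤ exp (k - ℓ i) * W i)
    (hc : 0 ≤ c) {f : S → ℝ} (hf1 : ∀ j, 1 ≤ f j) (hfW : ∀ j, f j ≤ c * W j) (i : S) :
    1 ≤ riskOperator P ℓ f i ∧ riskOperator P ℓ f i ≤ exp k * c * W i := by
  have hPf_le : ∀ j, P i j * f j ≤ c * (P i j * W j) := fun j => by
    rw [mul_left_comm]; exact mul_le_mul_of_nonneg_left (hfW j) (hP0 i j)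
  have hPf_summable : Summable fun j => P i j * f j :=
    .of_nonneg_of_le (fun j => mul_nonneg (hP0 i j) (zero_le_one.trans (hf1 j))) hPf_le
      ((hsum i).mul_left c)
  have hone : 1 ≤ ∑' j, P i j * f j :=
    calc (1 : ℝ) = ∑' j, P i j * 1 := by simpa using (hP1 i).tsum_eq.symm
      _ ≤ ∑' j, P i j * f j := Summable.tsum_le_tsum
          (fun j => mul_le_mul_of_nonneg_left (hf1 j) (hP0 i j))
          (by simpa using (hP1 i).summable) hPf_summable
  refine ⟨hone.trans (le_mul_of_one_le_left (zero_le_one.trans hone) (one_le_exp (hℓ i))), ?_⟩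
  calc riskOperator P ℓ f i ≤ exp (ℓ i) * (c * ∑' j, P i j * W j) := by
        rw [← tsum_mul_left]
        exact mul_le_mul_of_nonneg_left
          (hPf_summable.tsum_le_tsum hPf_le ((hsum i).mul_left c)) (exp_nonneg _)
    _ ≤ exp (ℓ i) * (c * (exp (k - ℓ i) * W i)) := by gcongr; exact hdrift i
    _ = exp (ℓ i + (k - ℓ i)) * c * W i := by rw [exp_add]; ring
    _ = exp k * c * W i := by rw [add_sub_cancel]

theorem iterate_riskOperator_mem_band {W : S → ℝ} {k : ℝ} (hP0 : ∀ i j, 0 ≤ P i j)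
    (hP1 : ∀ i, HasSum (P i) 1) (hW : ∀ i, 1 ≤ W i) (hℓ : ∀ i, 0 ≤ ℓ i)
    (hsum : ∀ i, Summable fun j => P i j * W j)
    (hdrift : ∀ i, ∑' j, P i j * W j ≤ exp (k - ℓ i) * W i) (T : ℕ) (i : S) :
    1 ≤ (riskOperator P ℓ)^[T] 1 i ∧ (riskOperator P ℓ)^[T] 1 i ≤ exp (k * T) * W i := by
  induction T generalizing i with
  | zero => simpa using hW i
  | succ T ih =>
    rw [Function.iterate_succ_apply', Nat.cast_succ, mul_add_one, exp_add, mul_comm (exp _)]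
    exact riskOperator_mem_band hP0 hP1 hℓ hsum hdrift (exp_nonneg _)
      (fun j => (ih j).1) (fun j => (ih j).2) i

end RiskSensitive

theorem limsup_one_div_mul_log_le {u : ℕ → ℝ} {k C : ℝ} (hu1 : ∀ T, 1 ≤ u T)
    (huC : ∀ T, u T ≤ exp (k * T) * C) :
    limsup (fun T : ℕ => (1 / (T : ℝ)) * log (u T)) atTop ≤ k := by
  have hC : 0 < C := by simpa using zero_lt_one.trans_le ((hu1 0).trans (huC 0))
  have hbound : ∀ᶠ T : ℕ in atTop, (1 / (T : ℝ)) * log (u T) ≤ k + log C / T := by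
    filter_upwards [eventually_gt_atTop 0] with T hT
    calc (1 / (T : ℝ)) * log (u T) ≤ (1 / (T : ℝ)) * log (exp (k * T) * C) := by
          gcongr
          · exact zero_lt_one.trans_le (hu1 T)
          · exact huC T
      _ = k + log C / T := by
          rw [log_mul (exp_ne_zero _) hC.ne', log_exp]; field_simp
  have hlim : Tendsto (fun T : ℕ => k + log C / T) atTop (nhds k) := by
    simpa using tendsto_const_nhds.add
      (tendsto_const_nhds.div_atTop (tendsto_natCast_atTop_atTop (R := ℝ)))
  have hnonneg : ∀ T : ℕ, 0 ≤ (1 / (T : ℝ)) * log (u T) :=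
    fun T => mul_nonneg (by positivity) (log_nonneg (hu1 T))
  calc limsup (fun T : ℕ => (1 / (T : ℝ)) * log (u T)) atTop
      ≤ limsup (fun T : ℕ => k + log C / T) atTop :=
        limsup_le_limsup hbound
          (isBoundedUnder_of_eventually_ge (.of_forall hnonneg)).isCoboundedUnder_le
          hlim.isBoundedUnder_le
    _ = k := hlim.limsup_eq

theorem drift_risk_sensitive_value_bound_general
    {S : Type*} (P : S → S → ℝ)
    (hP0 : ∀ i j, 0 ≤ P i j) (hP1 : ∀ i, HasSum (P i) 1)
    (W ℓ : S → ℝ) (hW : ∀ i, 1 ≤ W i) (hℓ : ∀ i, 0 ≤ ℓ i) (k : ℝ)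
    (hsum : ∀ i, Summable fun j => P i j * W j)
    (hdrift : ∀ i, ∑' j, P i j * W j ≤ Real.exp (k - ℓ i) * W i) :
    ∀ i : S,
      Filter.limsup
        (fun T : ℕ =>
          (1 / (T : ℝ)) * Real.log
            (((fun f : S → ℝ => fun i => Real.exp (ℓ i) * ∑' j, P i j * f j)^[T]
              (fun _ => 1)) i))
        Filter.atTop ≤ k := fun i =>
  limsup_one_div_mul_log_le
    (fun T => (iterate_riskOperator_mem_band hP0 hP1 hW hℓ hsum hdrift T i).1)
    (fun T => (iterate_riskOperator_mem_band hP0 hP1 hW hℓ hsum hdrift T i).2)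

/-- Under the multiplicative drift condition, the risk-sensitive ergodic value of the
running cost `ℓ` is bounded by the drift constant `k`:
`limsup_T (1/T) log E_i[exp(∑_{t<T} ℓ(X_t))] ≤ k`, where the expectation is the `T`-fold
iterate of `f ↦ (i ↦ exp(ℓ i) ∑_j P(i,j) f(j))` applied to the constant function `1`. -/
theorem drift_risk_sensitive_value_bound
    {S : Type*} [Countable S] (P : S → S → ℝ)
    (hP0 : ∀ i j, 0 ≤ P i j) (hP1 : ∀ i, HasSum (P i) 1)
    (W ℓ : S → ℝ) (hW : ∀ i, 1 ≤ W i) (hℓ : ∀ i, 0 ≤ ℓ i) (k : ℝ)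
    (hsum : ∀ i, Summable fun j => P i j * W j)
    (hdrift : ∀ i, ∑' j, P i j * W j ≤ Real.exp (k - ℓ i) * W i) :
    ∀ i : S,
      Filter.limsup
        (fun T : ℕ =>
          (1 / (T : ℝ)) * Real.log
            (((fun f : S → ℝ => fun i => Real.exp (ℓ i) * ∑' j, P i j * f j)^[T]
              (fun _ => 1)) i))
        Filter.atTop ≤ k :=
  drift_risk_sensitive_value_bound_general P hP0 hP1 W ℓ hW hℓ k hsum hdrift
end

section
/- Let S be a countable set, P a stochastic matrix on S, W : S → ℝ with W ≥ 1, γ > 0 a constant, B ⊆ S a set, and suppose ∑_j P(i,j) W(j) ≤ exp(−γ) · W(i) for all i ∉ B. Let τ = inf{ t ≥ 0 : X_t ∈ B } be the first entry time of the chain into B. Then for every i ∉ B, E_i[ exp(γ τ) · W(X_τ) · 1_{τ < ∞} ] ≤ W(i). -/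
open Classical in
/-- Exponential-moment hitting time estimate: if `∑_j P(i,j) W(j) ≤ exp(−γ) W(i)` off `B`,
then `E_i[exp(γ τ) W(X_τ) 1_{τ<∞}] ≤ W(i)` for `i ∉ B`, where `τ` is the first entry time
of `B`. The stopped expectation is the monotone limit (supremum) of the truncated
expectations `u N i = E_i[exp(γ τ) W(X_τ) 1_{τ ≤ N}]`, defined by the usual recursion. -/
theorem exponential_hitting_time_bound
    {S : Type*} [Countable S] (P : S → S → ℝ)
    (hP0 : ∀ i j, 0 ≤ P i j) (hP1 : ∀ i, HasSum (P i) 1)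
    (W : S → ℝ) (hW : ∀ i, 1 ≤ W i) (γ : ℝ) (hγ : 0 < γ) (B : Set S)
    (hsum : ∀ i, Summable fun j => P i j * W j)
    (hdrift : ∀ i ∉ B, ∑' j, P i j * W j ≤ Real.exp (-γ) * W i)
    (u : ℕ → S → ℝ)
    (hu0 : ∀ i, u 0 i = if i ∈ B then W i else 0)
    (huS : ∀ N i, u (N + 1) i =
      if i ∈ B then W i else Real.exp γ * ∑' j, P i j * u N j) :
    ∀ i ∉ B, (⨆ N, u N i) ≤ W i := by
  have key : ∀ N i, 0 ≤ u N i ∧ u N i ≤ W i := by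
    intro N
    induction N with
    | zero =>
      intro i
      rw [hu0]
      by_cases h : i ∈ B <;> simp [h]
      · exact le_trans zero_le_one (hW i)
      · exact le_trans zero_le_one (hW i)
    | succ N ih =>
      intro i
      rw [huS]
      by_cases h : i ∈ B
      · simp [h]; exact le_trans zero_le_one (hW i)
      · simp only [h, if_false]
        have hsumu : Summable fun j => P i j * u N j := by
          apply Summable.of_nonneg_of_le (fun j => mul_nonneg (hP0 i j) (ih j).1)
            (fun j => mul_le_mul_of_nonneg_left (ih j).2 (hP0 i j)) (hsum i)
        have h1 : ∑' j, P i j * u N j ≤ ∑' j, P i j * W j :=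
          Summable.tsum_le_tsum (fun j => mul_le_mul_of_nonneg_left (ih j).2 (hP0 i j)) hsumu (hsum i)
        have h2 : ∑' j, P i j * u N j ≤ Real.exp (-γ) * W i := h1.trans (hdrift i h)
        constructor
        · exact mul_nonneg (Real.exp_pos γ).le (tsum_nonneg fun j => mul_nonneg (hP0 i j) (ih j).1)
        · calc Real.exp γ * ∑' j, P i j * u N j
              ≤ Real.exp γ * (Real.exp (-γ) * W i) :=
                mul_le_mul_of_nonneg_left h2 (Real.exp_pos γ).le
            _ = W i := by rw [← mul_assoc, ← Real.exp_add]; simp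
  intro i _
  exact ciSup_le fun N => (key N i).2
end

section
/- Let S be a countable set, P a stochastic matrix on S, W ≥ 1, ℓ : S → ℝ nonnegative, B ⊆ S, and suppose ∑_j P(i,j) W(j) ≤ exp(−ℓ(i)) · W(i) for all i ∉ B. Let τ = inf{ t ≥ 0 : X_t ∈ B }. Then for every i ∉ B, E_i[ exp(∑_{s=0}^{τ−1} ℓ(X_s)) · W(X_τ) · 1_{τ < ∞} ] ≤ W(i). -/
open Classical in
/-- Multiplicative Lyapunov hitting-time bound: if `∑_j P(i,j) W(j) ≤ exp(−ℓ(i)) W(i)` off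
`B`, then `E_i[exp(∑_{s<τ} ℓ(X_s)) W(X_τ) 1_{τ<∞}] ≤ W(i)` for `i ∉ B`, where `τ` is the
first entry time of `B`; the stopped expectation is the supremum of the truncated
expectations `u N`, defined by the usual recursion. -/
theorem multiplicative_hitting_time_bound
    {S : Type*} [Countable S] (P : S → S → ℝ)
    (hP0 : ∀ i j, 0 ≤ P i j) (hP1 : ∀ i, HasSum (P i) 1)
    (W ℓ : S → ℝ) (hW : ∀ i, 1 ≤ W i) (hℓ : ∀ i, 0 ≤ ℓ i) (B : Set S)
    (hsum : ∀ i, Summable fun j => P i j * W j)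
    (hdrift : ∀ i ∉ B, ∑' j, P i j * W j ≤ Real.exp (-ℓ i) * W i)
    (u : ℕ → S → ℝ)
    (hu0 : ∀ i, u 0 i = if i ∈ B then W i else 0)
    (huS : ∀ N i, u (N + 1) i =
      if i ∈ B then W i else Real.exp (ℓ i) * ∑' j, P i j * u N j) :
    ∀ i ∉ B, (⨆ N, u N i) ≤ W i := by
  have hW0 : ∀ i, 0 ≤ W i := fun i => le_trans zero_le_one (hW i)
  have key : ∀ N i, 0 ≤ u N i ∧ u N i ≤ W i := by
    intro N
    induction N with
    | zero =>
      intro i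
      rw [hu0 i]
      split
      · exact ⟨hW0 i, le_refl _⟩
      · exact ⟨le_refl _, hW0 i⟩
    | succ N ih =>
      intro i
      rw [huS N i]
      split
      · exact ⟨hW0 i, le_refl _⟩
      · rename_i hiB
        have hnn : ∀ j, 0 ≤ P i j * u N j := fun j =>
          mul_nonneg (hP0 i j) (ih j).1
        have hle : ∀ j, P i j * u N j ≤ P i j * W j := fun j =>
          mul_le_mul_of_nonneg_left (ih j).2 (hP0 i j)
        have hsumm : Summable fun j => P i j * u N j :=
          Summable.of_nonneg_of_le hnn hle (hsum i)
        have h1 : ∑' j, P i j * u N j ≤ ∑' j, P i j * W j :=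
          Summable.tsum_le_tsum hle hsumm (hsum i)
        have h2 : ∑' j, P i j * u N j ≤ Real.exp (-ℓ i) * W i :=
          h1.trans (hdrift i hiB)
        constructor
        · exact mul_nonneg (Real.exp_pos _).le (tsum_nonneg hnn)
        · calc Real.exp (ℓ i) * ∑' j, P i j * u N j
              ≤ Real.exp (ℓ i) * (Real.exp (-ℓ i) * W i) :=
                mul_le_mul_of_nonneg_left h2 (Real.exp_pos _).le
            _ = W i := by rw [← mul_assoc, ← Real.exp_add]; simp
  intro i _
  exact ciSup_le fun N => (key N i).2
end

section
/- Let S be a countable set, P an irreducible stochastic matrix, ρ ∈ ℝ, c : S → ℝ, and ψ₁, ψ₂ : S → ℝ strictly positive functions both satisfying e^ρ ψ(i) = e^{c(i)} ∑_j P(i,j) ψ(j) for all i ∈ S. Suppose in addition ψ₁ − k·ψ₂ ≥ 0 on S where k = inf_i ψ₁(i)/ψ₂(i) is attained at some i₀ ∈ S. Then ψ₁ = k·ψ₂, i.e., the eigenfunction is unique up to a positive multiplicative constant. -/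
/-!
The difference `φ = ψ₁ - k ψ₂` is again a nonnegative solution of the twisted eigenvalue
equation, and it vanishes at `i₀`. If a nonnegative solution vanishes at `i`, the equation at `i`
forces `∑ⱼ P(i,j) φ(j) = 0`, so `φ` vanishes at every `j` reachable in one step from `i`. The zero
set of `φ` is therefore closed under the transitions of `P`, and by irreducibility it is all of `S`.
-/

open Classical in
/-- `n`-step transition matrix of the kernel `P`. -/
noncomputable def matPow {S : Type*} (P : S → S → ℝ) : ℕ → S → S → ℝ
  | 0 => fun i j => if i = j then 1 else 0
  | n + 1 => fun i j => ∑' k, P i k * matPow P n k j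

open Real

section Kernel

variable {S : Type*} {P : S → S → ℝ}

lemma matPow_nonneg (hP0 : ∀ i j, 0 ≤ P i j) (n : ℕ) (i j : S) : 0 ≤ matPow P n i j := by
  induction n generalizing i j with
  | zero => simp only [matPow]; split_ifs <;> norm_num
  | succ n ih => exact tsum_nonneg fun l => mul_nonneg (hP0 i l) (ih l j)

lemma exists_pos_of_matPow_succ_pos (hP0 : ∀ i j, 0 ≤ P i j) {n : ℕ} {i j : S}
    (h : 0 < matPow P (n + 1) i j) : ∃ l, 0 < P i l ∧ 0 < matPow P n l j := by
  by_contra! hne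
  refine h.not_ge (tsum_nonpos fun l => ?_)
  rcases (hP0 i l).eq_or_lt with hzero | hpos
  · rw [← hzero, zero_mul]
  · exact mul_nonpos_of_nonneg_of_nonpos hpos.le (hne l hpos)

lemma mem_of_matPow_pos (hP0 : ∀ i j, 0 ≤ P i j) {Z : Set S}
    (hZ : ∀ i j, i ∈ Z → 0 < P i j → j ∈ Z) (n : ℕ) {i j : S} (hi : i ∈ Z)
    (hpos : 0 < matPow P n i j) : j ∈ Z := by
  induction n generalizing i with
  | zero =>
    simp only [matPow] at hpos
    split_ifs at hpos with hij
    · exact hij ▸ hi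
    · exact absurd hpos (lt_irrefl 0)
  | succ n ih =>
    obtain ⟨l, hPl, hl⟩ := exists_pos_of_matPow_succ_pos hP0 hpos
    exact ih (hZ i l hi hPl) hl

lemma eq_univ_of_irreducible (hP0 : ∀ i j, 0 ≤ P i j)
    (hirr : ∀ i j : S, ∃ n : ℕ, 0 < matPow P n i j) {Z : Set S}
    (hZ : ∀ i j, i ∈ Z → 0 < P i j → j ∈ Z) {i₀ : S} (hi₀ : i₀ ∈ Z) : Z = Set.univ :=
  Set.eq_univ_of_forall fun j =>
    let ⟨n, hpos⟩ := hirr i₀ j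
    mem_of_matPow_pos hP0 hZ n hi₀ hpos

end Kernel

section TwistedEigenfunction

variable {S : Type*} {P : S → S → ℝ} {ρ : ℝ} {c : S → ℝ}

structure IsTwistedEigenfunction (P : S → S → ℝ) (ρ : ℝ) (c : S → ℝ) (ψ : S → ℝ) : Prop where
  summable : ∀ i, Summable fun j => P i j * ψ j
  eq : ∀ i, exp ρ * ψ i = exp (c i) * ∑' j, P i j * ψ j

lemma IsTwistedEigenfunction.sub_const_mul {ψ₁ ψ₂ : S → ℝ}
    (h₁ : IsTwistedEigenfunction P ρ c ψ₁) (h₂ : IsTwistedEigenfunction P ρ c ψ₂) (k : ℝ) :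
    IsTwistedEigenfunction P ρ c fun i => ψ₁ i - k * ψ₂ i := by
  have hterm : ∀ i, (fun j => P i j * (ψ₁ j - k * ψ₂ j))
      = fun j => P i j * ψ₁ j - k * (P i j * ψ₂ j) := fun i => funext fun j => by ring
  refine ⟨fun i => hterm i ▸ (h₁.summable i).sub ((h₂.summable i).mul_left k), fun i => ?_⟩
  rw [hterm i, (h₁.summable i).tsum_sub ((h₂.summable i).mul_left k), tsum_mul_left]
  linear_combination h₁.eq i - k * h₂.eq i

lemma IsTwistedEigenfunction.eq_zero_of_eq_zero {φ : S → ℝ}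
    (hφ : IsTwistedEigenfunction P ρ c φ) (hP0 : ∀ i j, 0 ≤ P i j) (hφ0 : ∀ i, 0 ≤ φ i)
    {i j : S} (hi : φ i = 0) (hij : 0 < P i j) : φ j = 0 := by
  have hsum : ∑' l, P i l * φ l = 0 := by
    have := hφ.eq i
    rw [hi, mul_zero, eq_comm] at this
    exact (mul_eq_zero.mp this).resolve_left (exp_pos _).ne'
  by_contra hj
  refine (hφ.summable i).tsum_pos (fun l => mul_nonneg (hP0 i l) (hφ0 l)) j ?_ |>.ne' hsum
  exact mul_pos hij ((hφ0 j).lt_of_ne' hj)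

end TwistedEigenfunction

theorem twisted_eigenfunction_unique_general
    {S : Type*} (P : S → S → ℝ)
    (hP0 : ∀ i j, 0 ≤ P i j)
    (hirr : ∀ i j : S, ∃ n : ℕ, 1 ≤ n ∧ 0 < matPow P n i j)
    (ρ : ℝ) (c : S → ℝ) (ψ₁ ψ₂ : S → ℝ)
    (hψ₂pos : ∀ i, 0 < ψ₂ i)
    (hsum₁ : ∀ i, Summable fun j => P i j * ψ₁ j)
    (hsum₂ : ∀ i, Summable fun j => P i j * ψ₂ j)
    (heig₁ : ∀ i, Real.exp ρ * ψ₁ i = Real.exp (c i) * ∑' j, P i j * ψ₁ j)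
    (heig₂ : ∀ i, Real.exp ρ * ψ₂ i = Real.exp (c i) * ∑' j, P i j * ψ₂ j)
    (k : ℝ) (i₀ : S)
    (hk₀ : ψ₁ i₀ / ψ₂ i₀ = k)
    (hnonneg : ∀ i, 0 ≤ ψ₁ i - k * ψ₂ i) :
    ∀ i, ψ₁ i = k * ψ₂ i := by
  have hφ : IsTwistedEigenfunction P ρ c fun i => ψ₁ i - k * ψ₂ i :=
    IsTwistedEigenfunction.sub_const_mul ⟨hsum₁, heig₁⟩ ⟨hsum₂, heig₂⟩ k
  have hi₀ : ψ₁ i₀ - k * ψ₂ i₀ = 0 := by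
    rw [← hk₀, div_mul_cancel₀ _ (hψ₂pos i₀).ne', sub_self]
  have hZ := eq_univ_of_irreducible (Z := {i | ψ₁ i - k * ψ₂ i = 0}) hP0
    (fun i j => (hirr i j).imp fun _ => And.right)
    (fun _ _ hi hij => hφ.eq_zero_of_eq_zero hP0 hnonneg hi hij) hi₀
  exact fun i => sub_eq_zero.mp (Set.eq_univ_iff_forall.mp hZ i)

/-- Uniqueness (up to a positive multiplicative constant) of a positive eigenfunction of
the twisted kernel `e^{c(i)} ∑_j P(i,j) ψ(j) = e^ρ ψ(i)` on an irreducible chain, when the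
infimum `k` of `ψ₁/ψ₂` is attained. -/
theorem twisted_eigenfunction_unique
    {S : Type*} [Countable S] (P : S → S → ℝ)
    (hP0 : ∀ i j, 0 ≤ P i j) (hP1 : ∀ i, HasSum (P i) 1)
    (hirr : ∀ i j : S, ∃ n : ℕ, 1 ≤ n ∧ 0 < matPow P n i j)
    (ρ : ℝ) (c : S → ℝ) (ψ₁ ψ₂ : S → ℝ)
    (hψ₁pos : ∀ i, 0 < ψ₁ i) (hψ₂pos : ∀ i, 0 < ψ₂ i)
    (hsum₁ : ∀ i, Summable fun j => P i j * ψ₁ j)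
    (hsum₂ : ∀ i, Summable fun j => P i j * ψ₂ j)
    (heig₁ : ∀ i, Real.exp ρ * ψ₁ i = Real.exp (c i) * ∑' j, P i j * ψ₁ j)
    (heig₂ : ∀ i, Real.exp ρ * ψ₂ i = Real.exp (c i) * ∑' j, P i j * ψ₂ j)
    (k : ℝ) (i₀ : S)
    (hk : ∀ i, k ≤ ψ₁ i / ψ₂ i) (hk₀ : ψ₁ i₀ / ψ₂ i₀ = k)
    (hnonneg : ∀ i, 0 ≤ ψ₁ i - k * ψ₂ i) :
    ∀ i, ψ₁ i = k * ψ₂ i :=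
  twisted_eigenfunction_unique_general P hP0 hirr ρ c ψ₁ ψ₂ hψ₂pos hsum₁ hsum₂ heig₁ heig₂ k i₀ hk₀
    hnonneg
end

section
/- Let S be countable, P a stochastic matrix on S, B ⊆ S, c : S → ℝ with c(i) ≥ ρ for all i ∉ B (ρ ∈ ℝ), and ψ : S → ℝ nonnegative satisfying e^{c(i) − ρ} ∑_j P(i,j) ψ(j) ≤ ψ(i) for all i ∉ B. Let τ = inf{t ≥ 0 : X_t ∈ B}. Then for all i ∉ B and all N, E_i[ exp(∑_{t=0}^{(τ∧N)−1} (c(X_t) − ρ)) ψ(X_{τ∧N}) ] ≤ ψ(i). -/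
open Classical in
/-- Stopped multiplicative supermartingale inequality: if `c ≥ ρ` off `B` and `ψ ≥ 0`
satisfies `e^{c(i)−ρ} ∑_j P(i,j) ψ(j) ≤ ψ(i)` off `B`, then for all `N` the truncated
stopped expectation `E_i[exp(∑_{t<τ∧N}(c(X_t)−ρ)) ψ(X_{τ∧N})]`, given by the usual
recursion `v`, is at most `ψ(i)` for every `i ∉ B`. -/
theorem stopped_supermartingale_inequality
    {S : Type*} [Countable S] (P : S → S → ℝ)
    (hP0 : ∀ i j, 0 ≤ P i j) (hP1 : ∀ i, HasSum (P i) 1)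
    (B : Set S) (c : S → ℝ) (ρ : ℝ) (hc : ∀ i ∉ B, ρ ≤ c i)
    (ψ : S → ℝ) (hψ : ∀ i, 0 ≤ ψ i)
    (hsum : ∀ i, Summable fun j => P i j * ψ j)
    (hsuper : ∀ i ∉ B, Real.exp (c i - ρ) * ∑' j, P i j * ψ j ≤ ψ i)
    (v : ℕ → S → ℝ)
    (hv0 : ∀ i, v 0 i = ψ i)
    (hvS : ∀ N i, v (N + 1) i =
      if i ∈ B then ψ i else Real.exp (c i - ρ) * ∑' j, P i j * v N j) :
    ∀ i ∉ B, ∀ N : ℕ, v N i ≤ ψ i := by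
  have key : ∀ N : ℕ, ∀ i, 0 ≤ v N i ∧ v N i ≤ ψ i := by
    intro N
    induction N with
    | zero => intro i; rw [hv0]; exact ⟨hψ i, le_refl _⟩
    | succ N ih =>
      intro i
      rw [hvS]
      by_cases hi : i ∈ B
      · simp [hi]; exact hψ i
      · simp only [hi, if_false]
        have hsummv : Summable fun j => P i j * v N j :=
          Summable.of_nonneg_of_le
            (fun j => mul_nonneg (hP0 i j) (ih j).1)
            (fun j => mul_le_mul_of_nonneg_left (ih j).2 (hP0 i j)) (hsum i)
        constructor
        · exact mul_nonneg (Real.exp_pos _).le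
            (tsum_nonneg fun j => mul_nonneg (hP0 i j) (ih j).1)
        · calc Real.exp (c i - ρ) * ∑' j, P i j * v N j
              ≤ Real.exp (c i - ρ) * ∑' j, P i j * ψ j := by
                apply mul_le_mul_of_nonneg_left _ (Real.exp_pos _).le
                exact Summable.tsum_le_tsum
                  (fun j => mul_le_mul_of_nonneg_left (ih j).2 (hP0 i j))
                  hsummv (hsum i)
            _ ≤ ψ i := hsuper i hi
  exact fun i _ N => (key N i).2
end
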